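/- arXiv:1510.02397 — 5 statements merged into one kernel-verified Lean document; each statement's English description precedes it below -/
import Mathlib

section
/- Let f and g be partial-bijections of Ω, with f a bijection from A_f onto B_f and g a bijection from A_g onto B_g. Then the complement of the codomain of the composite g ∘ f satisfies |(g(B_f ∩ A_g))ᶜ| = |B_gᶜ| + |B_fᶜ \ A_gᶜ|. -/
namespace Set

variable {α β : Type*}

theorem ncard_compl_of_subset {X B : Set α} (hXB : X ⊆ B) (hB : Bᶜ.Finite)
    (hBX : (B \ X).Finite) : Xᶜ.ncard = Bᶜ.ncard + (B \ X).ncard := by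
  have hX : Xᶜ.Finite := (hB.union hBX).subset fun x hx => by by_cases x ∈ B <;> simp_all
  rw [← ncard_sdiff_add_ncard_of_subset (compl_subset_compl.2 hXB) hX, compl_sdiff_compl,
    add_comm]

theorem BijOn.sdiff_image_inter {f : α → β} {s u : Set α} {t : Set β} (h : BijOn f s t) :
    t \ f '' (u ∩ s) = f '' (s \ u) := by
  rw [h.injOn.image_sdiff, h.image_eq, inter_comm]

end Set

open Set

theorem stmt_5_general {Ω : Type*} (g : Ω → Ω) (Bf Ag Bg : Set Ω)
    (hBf : Bfᶜ.Finite) (hBg : Bgᶜ.Finite) (hg : Set.BijOn g Ag Bg) :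
    (g '' (Bf ∩ Ag))ᶜ.ncard = Bgᶜ.ncard + (Bfᶜ \ Agᶜ).ncard := by
  have hsub : g '' (Bf ∩ Ag) ⊆ Bg := hg.image_eq ▸ image_mono inter_subset_right
  have hfin : (Bg \ g '' (Bf ∩ Ag)).Finite := by
    rw [hg.sdiff_image_inter]
    exact (hBf.subset fun _ hx => hx.2).image g
  rw [ncard_compl_of_subset hsub hBg hfin, hg.sdiff_image_inter,
    (hg.injOn.mono sdiff_subset).ncard_image, compl_sdiff_compl]

/-- The complement of the codomain of a composite of partial-bijections:
`|(g(Bf ∩ Ag))ᶜ| = |Bgᶜ| + |Bfᶜ \ Agᶜ|`. -/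
theorem stmt_5 {Ω : Type*} [Infinite Ω] (f g : Ω → Ω) (Af Bf Ag Bg : Set Ω)
    (hAf : Afᶜ.Finite) (hBf : Bfᶜ.Finite) (hf : Set.BijOn f Af Bf)
    (hAg : Agᶜ.Finite) (hBg : Bgᶜ.Finite) (hg : Set.BijOn g Ag Bg) :
    (g '' (Bf ∩ Ag))ᶜ.ncard = Bgᶜ.ncard + (Bfᶜ \ Agᶜ).ncard :=
  stmt_5_general g Bf Ag Bg hBf hBg hg
end

section
/- Let f and g be partial-bijections of Ω, with f a bijection from A_f onto B_f and g a bijection from A_g onto B_g. Then the composite partial-bijection g ∘ f (a bijection from A_f ∩ f⁻¹(A_g) onto g(B_f ∩ A_g)) satisfies ind(g ∘ f) = ind(g) + ind(f). -/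
/-!
Both complements of `g ∘ f` split into a part inherited from one factor and a part where `f` and
`g` fail to match: the domain misses `A_fᶜ` together with the preimage under `f` of `B_f \ A_g`,
and the image misses `B_gᶜ` together with `g(A_g \ B_f)`. As `f` and `g` are injective, the
mismatch contributes `|B_f \ A_g| − |A_g \ B_f|` to the index, which is exactly `|A_gᶜ| − |B_fᶜ|`.
-/

namespace Set

variable {α β : Type*}

theorem ncard_compl_of_subset_s6 {s t : Set α} (hst : s ⊆ t) (ht : tᶜ.Finite)
    (hts : (t \ s).Finite) : sᶜ.ncard = tᶜ.ncard + (t \ s).ncard := by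
  have hcompl : sᶜ \ tᶜ = t \ s := compl_sdiff_compl
  have hfin : sᶜ.Finite := ((hcompl ▸ hts).union ht).subset (subset_sdiff_union _ _)
  rw [← ncard_sdiff_add_ncard_of_subset (compl_subset_compl.2 hst) hfin, hcompl, add_comm]

theorem ncard_compl_sub_ncard_compl {s t : Set α} (hs : sᶜ.Finite) (ht : tᶜ.Finite) :
    (sᶜ.ncard : ℤ) - tᶜ.ncard = (t \ s).ncard - (s \ t).ncard := by
  have hs' := ncard_inter_add_ncard_sdiff_eq_ncard sᶜ tᶜ hs
  have ht' := ncard_inter_add_ncard_sdiff_eq_ncard tᶜ sᶜ ht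
  rw [compl_sdiff_compl] at hs' ht'
  rw [inter_comm] at ht'
  omega

namespace BijOn

variable {f : α → β} {s : Set α} {t : Set β}

theorem ncard_compl_inter_preimage (hf : BijOn f s t) (hs : sᶜ.Finite) {u : Set β}
    (hu : (t \ u).Finite) : (s ∩ f ⁻¹' u)ᶜ.ncard = sᶜ.ncard + (t \ u).ncard := by
  have hinj : InjOn f (s \ f ⁻¹' u) := hf.injOn.mono sdiff_subset
  have himage : f '' (s \ f ⁻¹' u) = t \ u := by rw [image_sdiff_preimage, hf.image_eq]
  have hfin : (s \ f ⁻¹' u).Finite := Finite.of_finite_image (himage ▸ hu) hinj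
  rw [ncard_compl_of_subset_s6 inter_subset_left hs (by rwa [sdiff_self_inter]), sdiff_self_inter,
    ← himage, hinj.ncard_image]

theorem ncard_compl_image_inter (hf : BijOn f s t) (ht : tᶜ.Finite) {r : Set α}
    (hr : (s \ r).Finite) : (f '' (r ∩ s))ᶜ.ncard = tᶜ.ncard + (s \ r).ncard := by
  have hinj : InjOn f (s \ r) := hf.injOn.mono sdiff_subset
  have hdiff : t \ f '' (r ∩ s) = f '' (s \ r) := by
    rw [hf.injOn.image_sdiff, hf.image_eq, inter_comm]
  have hsub : f '' (r ∩ s) ⊆ t := hf.image_eq ▸ image_mono inter_subset_right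
  rw [ncard_compl_of_subset_s6 hsub ht (hdiff ▸ hr.image f), hdiff, hinj.ncard_image]

end BijOn

end Set

open Set in
theorem stmt_6_general {Ω : Type*} (f g : Ω → Ω) (Af Bf Ag Bg : Set Ω)
    (hAf : Afᶜ.Finite) (hBf : Bfᶜ.Finite) (hf : Set.BijOn f Af Bf)
    (hAg : Agᶜ.Finite) (hBg : Bgᶜ.Finite) (hg : Set.BijOn g Ag Bg) :
    ((Af ∩ f ⁻¹' Ag)ᶜ.ncard : ℤ) - ((g '' (Bf ∩ Ag))ᶜ.ncard : ℤ) =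
      ((Agᶜ.ncard : ℤ) - (Bgᶜ.ncard : ℤ)) + ((Afᶜ.ncard : ℤ) - (Bfᶜ.ncard : ℤ)) := by
  have hmismatch := ncard_compl_sub_ncard_compl hAg hBf
  rw [hf.ncard_compl_inter_preimage hAf (hAg.subset (sdiff_subset_compl _ _)),
    hg.ncard_compl_image_inter hBg (hBf.subset (sdiff_subset_compl _ _))]
  push_cast
  linarith

/-- The index is additive under composition of partial-bijections. -/
theorem stmt_6 {Ω : Type*} [Infinite Ω] (f g : Ω → Ω) (Af Bf Ag Bg : Set Ω)
    (hAf : Afᶜ.Finite) (hBf : Bfᶜ.Finite) (hf : Set.BijOn f Af Bf)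
    (hAg : Agᶜ.Finite) (hBg : Bgᶜ.Finite) (hg : Set.BijOn g Ag Bg) :
    ((Af ∩ f ⁻¹' Ag)ᶜ.ncard : ℤ) - ((g '' (Bf ∩ Ag))ᶜ.ncard : ℤ) =
      ((Agᶜ.ncard : ℤ) - (Bgᶜ.ncard : ℤ)) + ((Afᶜ.ncard : ℤ) - (Bfᶜ.ncard : ℤ)) :=
  stmt_6_general f g Af Bf Ag Bg hAf hBf hf hAg hBg hg
end

section
/- Let f and g be partial-bijections of Ω with domains A_f, A_g. If ind(f) = ind(g), then there exists a permutation λ of Ω such that λ ∘ f and g agree on some cofinite subset of A_f ∩ A_g (i.e., λ ∘ f ≡ g). -/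
/-!
Restrict both maps to `E = A_f ∩ A_g`. Shrinking the domain of a partial bijection by finitely
many points removes as many points from its range, so `f|E` and `g|E` still have the indices of
`f` and `g`; since `E` is their common domain, equal indices mean that the complements of the
ranges `f '' E` and `g '' E` are equinumerous. The bijection `f x ↦ g x` from `f '' E` onto
`g '' E` can therefore be completed by any bijection between these finite complements.
-/

open Set

lemma Set.exists_perm_extend_of_ncard_compl_eq {α : Type*} {S T : Set α} (e : S ≃ T)
    (hS : Sᶜ.Finite) (hT : Tᶜ.Finite) (hcard : Sᶜ.ncard = Tᶜ.ncard) :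
    ∃ l : α ≃ α, ∀ x : S, l x = e x := by
  classical
  have := hS.to_subtype
  have := hT.to_subtype
  obtain ⟨e'⟩ : Nonempty (↥Sᶜ ≃ ↥Tᶜ) := by
    rw [← Finite.card_eq, Nat.card_coe_set_eq, Nat.card_coe_set_eq, hcard]
  exact ⟨Equiv.subtypeCongr e e', fun x => by simp [Equiv.subtypeCongr]⟩

lemma Set.exists_perm_comp_eqOn_of_ncard_compl_image_eq {α : Type*} {f g : α → α} {E : Set α}
    (hf : InjOn f E) (hg : InjOn g E) (hfE : (f '' E)ᶜ.Finite) (hgE : (g '' E)ᶜ.Finite)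
    (hcard : (f '' E)ᶜ.ncard = (g '' E)ᶜ.ncard) :
    ∃ l : α ≃ α, EqOn (l ∘ f) g E := by
  obtain ⟨l, hl⟩ := exists_perm_extend_of_ncard_compl_eq
    ((hf.bijOn_image.equiv f).symm.trans (hg.bijOn_image.equiv g)) hfE hgE hcard
  refine ⟨l, fun x hx => ?_⟩
  have hsymm : (hf.bijOn_image.equiv f).symm ⟨f x, mem_image_of_mem f hx⟩ = ⟨x, hx⟩ :=
    (Equiv.symm_apply_eq _).2 rfl
  rw [Function.comp_apply, hl ⟨f x, mem_image_of_mem f hx⟩, Equiv.trans_apply, hsymm]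
  rfl

lemma Set.finite_compl_image_of_finite_diff {α β : Type*} {f : α → β} {A E : Set α}
    (hA : (f '' A)ᶜ.Finite) (hAE : (A \ E).Finite) : (f '' E)ᶜ.Finite :=
  (hA.union (hAE.image f)).subset fun y hy => by
    by_cases hyA : y ∈ f '' A
    · obtain ⟨a, ha, rfl⟩ := hyA
      exact Or.inr ⟨a, ⟨ha, fun haE => hy ⟨a, haE, rfl⟩⟩, rfl⟩
    · exact Or.inl hyA

lemma Set.InjOn.ncard_compl_image_eq_add {α β : Type*} {f : α → β} {A E : Set α}
    (hf : InjOn f A) (hEA : E ⊆ A) (hA : (f '' A)ᶜ.Finite) (hAE : (A \ E).Finite) :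
    (f '' E)ᶜ.ncard = (f '' A)ᶜ.ncard + (A \ E).ncard := by
  have hsub : (f '' A)ᶜ ⊆ (f '' E)ᶜ := compl_subset_compl.2 (image_mono hEA)
  have hdiff : (f '' E)ᶜ \ (f '' A)ᶜ = f '' (A \ E) := by
    rw [hf.image_sdiff_subset hEA, sdiff_compl, inter_comm, sdiff_eq]
  rw [← ncard_sdiff_add_ncard_of_subset hsub (finite_compl_image_of_finite_diff hA hAE), hdiff,
    (hf.mono sdiff_subset).ncard_image, add_comm]

lemma Set.InjOn.index_restrict_eq {α : Type*} {f : α → α} {A E : Set α}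
    (hf : InjOn f A) (hEA : E ⊆ A) (hA : Aᶜ.Finite) (hfA : (f '' A)ᶜ.Finite)
    (hAE : (A \ E).Finite) :
    (Eᶜ.ncard : ℤ) - (f '' E)ᶜ.ncard = (Aᶜ.ncard : ℤ) - (f '' A)ᶜ.ncard := by
  have hdom := injOn_id A |>.ncard_compl_image_eq_add hEA (by rwa [image_id]) hAE
  rw [image_id, image_id] at hdom
  rw [hdom, hf.ncard_compl_image_eq_add hEA hfA hAE]
  push_cast
  ring

theorem stmt_10_general {Ω : Type*} (f g : Ω → Ω) (Af Bf Ag Bg : Set Ω)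
    (hAf : Afᶜ.Finite) (hBf : Bfᶜ.Finite) (hf : Set.BijOn f Af Bf)
    (hAg : Agᶜ.Finite) (hBg : Bgᶜ.Finite) (hg : Set.BijOn g Ag Bg)
    (hind : (Afᶜ.ncard : ℤ) - (Bfᶜ.ncard : ℤ) = (Agᶜ.ncard : ℤ) - (Bgᶜ.ncard : ℤ)) :
    ∃ l : Ω ≃ Ω, ∃ E ⊆ Af ∩ Ag, Eᶜ.Finite ∧ ∀ x ∈ E, l (f x) = g x := by
  rw [← hf.image_eq] at hBf hind
  rw [← hg.image_eq] at hBg hind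
  have hAfE : (Af \ (Af ∩ Ag)).Finite := hAg.subset fun x hx hxg => hx.2 ⟨hx.1, hxg⟩
  have hAgE : (Ag \ (Af ∩ Ag)).Finite := hAf.subset fun x hx hxf => hx.2 ⟨hxf, hx.1⟩
  have hindf := hf.injOn.index_restrict_eq inter_subset_left hAf hBf hAfE
  have hindg := hg.injOn.index_restrict_eq inter_subset_right hAg hBg hAgE
  obtain ⟨l, hl⟩ := exists_perm_comp_eqOn_of_ncard_compl_image_eq
    (hf.injOn.mono inter_subset_left) (hg.injOn.mono inter_subset_right)
    (finite_compl_image_of_finite_diff hBf hAfE) (finite_compl_image_of_finite_diff hBg hAgE)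
    (by omega)
  exact ⟨l, Af ∩ Ag, subset_rfl, by rw [compl_inter]; exact hAf.union hAg, hl⟩

/-- Partial-bijections of equal index are related by a left permutation, up to
almost equality. -/
theorem stmt_10 {Ω : Type*} [Infinite Ω] (f g : Ω → Ω) (Af Bf Ag Bg : Set Ω)
    (hAf : Afᶜ.Finite) (hBf : Bfᶜ.Finite) (hf : Set.BijOn f Af Bf)
    (hAg : Agᶜ.Finite) (hBg : Bgᶜ.Finite) (hg : Set.BijOn g Ag Bg)
    (hind : (Afᶜ.ncard : ℤ) - (Bfᶜ.ncard : ℤ) = (Agᶜ.ncard : ℤ) - (Bgᶜ.ncard : ℤ)) :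
    ∃ l : Ω ≃ Ω, ∃ E ⊆ Af ∩ Ag, Eᶜ.Finite ∧ ∀ x ∈ E, l (f x) = g x :=
  stmt_10_general f g Af Bf Ag Bg hAf hBf hf hAg hBg hg hind
end

section
/- Let f and g be partial-bijections of Ω with domains A_f, A_g. If ind(f) = ind(g), then there exists a permutation ρ of Ω such that f ∘ ρ and g agree on some cofinite subset of ρ⁻¹(A_f) ∩ A_g (i.e., f ∘ ρ ≡ g). -/
/-!
Put `C = B_f ∩ B_g`. Cutting `f` and `g` down to `A_f' = A_f ∩ f⁻¹ C` and `A_g' = A_g ∩ g⁻¹ C`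
gives two bijections onto the same cofinite set `C`, and restricting a partial bijection to
the preimage of a cofinite subset of its range does not change its index. Hence
`|A_f'ᶜ| = |A_g'ᶜ|`, so `f⁻¹ ∘ g : A_g' → A_f'` extends, by any bijection `A_g'ᶜ ≃ A_f'ᶜ`,
to a permutation `ρ` of `Ω` with `f ∘ ρ = g` on `A_g'`.
-/

open Set

namespace Set

variable {α β : Type*} {f : α → β} {A : Set α} {B C : Set β}

theorem BijOn.inter_preimage_of_subset (h : BijOn f A B) (hC : C ⊆ B) :
    BijOn f (A ∩ f ⁻¹' C) C := by
  simpa [inter_eq_right.mpr hC] using h.inter_mapsTo (mapsTo_preimage f C) inter_subset_right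

theorem MapsTo.compl_inter_preimage (h : MapsTo f A B) :
    (A ∩ f ⁻¹' C)ᶜ = Aᶜ ∪ (A ∩ f ⁻¹' (B \ C)) := by
  ext x
  by_cases hx : x ∈ A
  · simp [hx, h hx]
  · simp [hx]

theorem BijOn.finite_compl_inter_preimage (h : BijOn f A B) (hA : Aᶜ.Finite)
    (hCc : Cᶜ.Finite) : (A ∩ f ⁻¹' C)ᶜ.Finite := by
  have hBC : (B \ C).Finite := hCc.subset fun _ hx ↦ hx.2
  rw [h.mapsTo.compl_inter_preimage]
  exact hA.union ((h.inter_preimage_of_subset sdiff_subset).finite_iff_finite.mpr hBC)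

/-- The index `|Aᶜ| - |Bᶜ|` is unchanged by restricting to the preimage of `C`. -/
theorem BijOn.ncard_compl_inter_preimage_add (h : BijOn f A B) (hC : C ⊆ B) (hA : Aᶜ.Finite)
    (hCc : Cᶜ.Finite) :
    (A ∩ f ⁻¹' C)ᶜ.ncard + Bᶜ.ncard = Aᶜ.ncard + Cᶜ.ncard := by
  have hBC : (B \ C).Finite := hCc.subset fun _ hx ↦ hx.2
  have hBc : Bᶜ.Finite := hCc.subset (compl_subset_compl.mpr hC)
  have hbij := h.inter_preimage_of_subset (sdiff_subset (s := B) (t := C))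
  have hCc_eq : Cᶜ = Bᶜ ∪ (B \ C) := by
    ext x
    have := @hC x
    simp only [mem_compl_iff, mem_union, mem_sdiff]
    tauto
  rw [h.mapsTo.compl_inter_preimage, hCc_eq,
    ncard_union_eq (disjoint_compl_left.mono_right inter_subset_left) hA
      (hbij.finite_iff_finite.mpr hBC),
    ncard_union_eq (disjoint_compl_left.mono_right sdiff_subset) hBc hBC,
    ← hbij.injOn.ncard_image, hbij.image_eq]
  ring

end Set

theorem exists_equiv_mapsTo_comp_eqOn {α β : Type*} {f g : α → β} {A A' : Set α} {C : Set β}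
    (hf : BijOn f A C) (hg : BijOn g A' C) (hA : Aᶜ.Finite) (hA' : A'ᶜ.Finite)
    (hcard : A'ᶜ.ncard = Aᶜ.ncard) :
    ∃ ρ : α ≃ α, MapsTo ρ A' A ∧ ∀ x ∈ A', f (ρ x) = g x := by
  classical
  have := hA.to_subtype
  have := hA'.to_subtype
  obtain ⟨eC⟩ : Nonempty (↥A'ᶜ ≃ ↥Aᶜ) := by
    rwa [← Finite.card_eq, Nat.card_coe_set_eq, Nat.card_coe_set_eq]
  let ρ : α ≃ α := (Equiv.Set.sumCompl A').symm.trans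
    (((hg.equiv g).trans (hf.equiv f).symm).sumCongr eC |>.trans (Equiv.Set.sumCompl A))
  have hρ : ∀ x (hx : x ∈ A'), ρ x = (hf.equiv f).symm (hg.equiv g ⟨x, hx⟩) := by
    intro x hx
    simp [ρ, Equiv.Set.sumCompl_symm_apply_of_mem hx]
  refine ⟨ρ, fun x hx ↦ hρ x hx ▸ Subtype.prop _, fun x hx ↦ ?_⟩
  rw [hρ x hx]
  exact congrArg Subtype.val ((hf.equiv f).apply_symm_apply (hg.equiv g ⟨x, hx⟩))

theorem stmt_11_general {Ω : Type*} (f g : Ω → Ω) (Af Bf Ag Bg : Set Ω)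
    (hAf : Afᶜ.Finite) (hBf : Bfᶜ.Finite) (hf : Set.BijOn f Af Bf)
    (hAg : Agᶜ.Finite) (hBg : Bgᶜ.Finite) (hg : Set.BijOn g Ag Bg)
    (hind : (Afᶜ.ncard : ℤ) - (Bfᶜ.ncard : ℤ) = (Agᶜ.ncard : ℤ) - (Bgᶜ.ncard : ℤ)) :
    ∃ ρ : Ω ≃ Ω, ∃ E ⊆ (⇑ρ ⁻¹' Af) ∩ Ag, Eᶜ.Finite ∧ ∀ x ∈ E, f (ρ x) = g x := by
  set C := Bf ∩ Bg
  have hCc : Cᶜ.Finite := by rw [compl_inter]; exact hBf.union hBg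
  have hf_ind := hf.ncard_compl_inter_preimage_add inter_subset_left hAf hCc
  have hg_ind := hg.ncard_compl_inter_preimage_add inter_subset_right hAg hCc
  have hEc := hg.finite_compl_inter_preimage hAg hCc
  obtain ⟨ρ, hρA, hρ⟩ := exists_equiv_mapsTo_comp_eqOn
    (hf.inter_preimage_of_subset inter_subset_left) (hg.inter_preimage_of_subset inter_subset_right)
    (hf.finite_compl_inter_preimage hAf hCc) hEc (by omega)
  exact ⟨ρ, Ag ∩ g ⁻¹' C, fun x hx ↦ ⟨(hρA hx).1, hx.1⟩, hEc, hρ⟩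

/-- Partial-bijections of equal index are related by a right permutation, up to
almost equality. -/
theorem stmt_11 {Ω : Type*} [Infinite Ω] (f g : Ω → Ω) (Af Bf Ag Bg : Set Ω)
    (hAf : Afᶜ.Finite) (hBf : Bfᶜ.Finite) (hf : Set.BijOn f Af Bf)
    (hAg : Agᶜ.Finite) (hBg : Bgᶜ.Finite) (hg : Set.BijOn g Ag Bg)
    (hind : (Afᶜ.ncard : ℤ) - (Bfᶜ.ncard : ℤ) = (Agᶜ.ncard : ℤ) - (Bgᶜ.ncard : ℤ)) :
    ∃ ρ : Ω ≃ Ω, ∃ E ⊆ (⇑ρ ⁻¹' Af) ∩ Ag, Eᶜ.Finite ∧ ∀ x ∈ E, f (ρ x) = g x :=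
  stmt_11_general f g Af Bf Ag Bg hAf hBf hf hAg hBg hg hind
end

section
/- Let f be a partial-bijection of Ω with domain A_f. Then ind(f) = 0 if and only if there exists a permutation π of Ω such that f and π agree on some cofinite subset of A_f (i.e., f ≡ π, where π is regarded as a partial-bijection with domain Ω). -/
/-!
If the index vanishes, the finite sets `Afᶜ` and `Bfᶜ` have the same size, so gluing `f` with any
bijection `Afᶜ → Bfᶜ` gives a permutation. Conversely, shrinking the domain of `f` to a cofinite
`E ⊆ Af` leaves the index unchanged (the removed points `Af \ E` and their images are equinumerous),
and on `E` the map `f` is a permutation `π`, whose index is `0` since `(π '' E)ᶜ = π '' Eᶜ`.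
-/

namespace Set

variable {α β : Type*}

theorem ncard_compl_eq_ncard_sdiff_add_ncard_compl {s t : Set α} (hst : s ⊆ t)
    (hs : sᶜ.Finite) : sᶜ.ncard = (t \ s).ncard + tᶜ.ncard := by
  rw [← compl_sdiff_compl, ncard_sdiff_add_ncard_of_subset (compl_subset_compl.2 hst) hs]

theorem BijOn.ncard_compl_add_ncard_compl_image {f : α → β} {A E : Set α} {B : Set β}
    (hf : BijOn f A B) (hEA : E ⊆ A) (hE : Eᶜ.Finite) (hB : Bᶜ.Finite) :
    Eᶜ.ncard + Bᶜ.ncard = Aᶜ.ncard + (f '' E)ᶜ.ncard := by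
  have hfEB : f '' E ⊆ B := (hf.mapsTo.mono_left hEA).image_subset
  have hgap : f '' (A \ E) = B \ f '' E := by
    rw [hf.injOn.image_sdiff_subset hEA, hf.image_eq]
  have hgap_card : (A \ E).ncard = (B \ f '' E).ncard := by
    rw [← hgap, (hf.injOn.mono sdiff_subset).ncard_image]
  have hfE : (f '' E)ᶜ.Finite := by
    rw [← sdiff_union_of_subset (compl_subset_compl.2 hfEB), compl_sdiff_compl, ← hgap]
    exact ((hE.subset fun _ hx => hx.2).image f).union hB
  rw [ncard_compl_eq_ncard_sdiff_add_ncard_compl hEA hE,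
    ncard_compl_eq_ncard_sdiff_add_ncard_compl hfEB hfE, hgap_card]
  ring

theorem ncard_compl_image_perm (π : Equiv.Perm α) (s : Set α) :
    (π '' s)ᶜ.ncard = sᶜ.ncard := by
  rw [← image_compl_eq π.bijective, ncard_image_of_injective _ π.injective]

theorem BijOn.exists_perm_eqOn {f : α → α} {A B : Set α} (hf : BijOn f A B)
    (e : ↥Aᶜ ≃ ↥Bᶜ) : ∃ π : Equiv.Perm α, EqOn f π A := by
  classical
  refine ⟨Equiv.subtypeCongr (hf.equiv f) e, fun x hx => ?_⟩
  simp [Equiv.subtypeCongr, hx, BijOn.equiv]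

end Set

theorem stmt_14_general {Ω : Type*} (f : Ω → Ω) (Af Bf : Set Ω)
    (hAf : Afᶜ.Finite) (hBf : Bfᶜ.Finite) (hf : Set.BijOn f Af Bf) :
    (Afᶜ.ncard : ℤ) - (Bfᶜ.ncard : ℤ) = 0 ↔
      ∃ π : Ω ≃ Ω, ∃ E ⊆ Af, Eᶜ.Finite ∧ ∀ x ∈ E, f x = π x := by
  constructor
  · intro hind
    have : Finite ↥Afᶜ := hAf.to_subtype
    have : Finite ↥Bfᶜ := hBf.to_subtype
    obtain ⟨e⟩ : Nonempty (↥Afᶜ ≃ ↥Bfᶜ) := by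
      rw [← Finite.card_eq, Nat.card_coe_set_eq, Nat.card_coe_set_eq]
      omega
    obtain ⟨π, hπ⟩ := hf.exists_perm_eqOn e
    exact ⟨π, Af, Set.Subset.rfl, hAf, hπ⟩
  · rintro ⟨π, E, hEA, hE, hfπ⟩
    have hindex := hf.ncard_compl_add_ncard_compl_image hEA hE hBf
    rw [Set.image_congr hfπ, Set.ncard_compl_image_perm] at hindex
    omega

/-- A partial-bijection has index zero iff it is almost equal to a permutation of Ω. -/
theorem stmt_14 {Ω : Type*} [Infinite Ω] (f : Ω → Ω) (Af Bf : Set Ω)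
    (hAf : Afᶜ.Finite) (hBf : Bfᶜ.Finite) (hf : Set.BijOn f Af Bf) :
    (Afᶜ.ncard : ℤ) - (Bfᶜ.ncard : ℤ) = 0 ↔
      ∃ π : Ω ≃ Ω, ∃ E ⊆ Af, Eᶜ.Finite ∧ ∀ x ∈ E, f x = π x :=
  stmt_14_general f Af Bf hAf hBf hf
end
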